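/- The class 2Eq_fin of all finite nonempty models of two equivalences is Σ1-interpretable without parameters in the class LEq_fin of all finite nonempty models of a linear order and an equivalence. -/

import Mathlib

open FirstOrder FirstOrder.Language

/-- A bounded formula is Σ₁ if it consists of a (possibly empty) block of existential
quantifiers followed by a quantifier-free formula. -/
inductive IsSigma1 {L : Language} {α : Type*} : {n : ℕ} → L.BoundedFormula α n → Prop
  | of_isQF {n : ℕ} {φ : L.BoundedFormula α n} : φ.IsQF → IsSigma1 φ
  | ex {n : ℕ} {φ : L.BoundedFormula α (n + 1)} : IsSigma1 φ → IsSigma1 φ.ex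

/-- `K1` (a class of `σ1`-structures) is Σ₁-interpretable without parameters in `K2`
(a class of `σ2`-structures). -/
def Sigma1Interpretable (σ1 σ2 : Language)
    (K1 : (A : Type) → σ1.Structure A → Prop)
    (K2 : (B : Type) → σ2.Structure B → Prop) : Prop :=
  ∃ (ΦU : σ2.Formula (Fin 1))
    (ΦR ΦnR : (n : ℕ) → σ1.Relations n → σ2.Formula (Fin n)),
    IsSigma1 ΦU ∧
    (∀ (n : ℕ) (R : σ1.Relations n), IsSigma1 (ΦR n R)) ∧
    (∀ (n : ℕ) (R : σ1.Relations n), IsSigma1 (ΦnR n R)) ∧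
    ∀ (A : Type) (SA : σ1.Structure A), K1 A SA →
      ∃ (B : Type) (SB : σ2.Structure B),
        K2 B SB ∧
        (letI := SB
         -- (1) the interpreted universe B' = {b | 𝔅 ⊨ ΦU(b)} is nonempty
         (∃ b : B, ΦU.Realize (fun _ => b)) ∧
         -- (2) on B', the formula ΦnR defines exactly the complement of ΦR
         (∀ (n : ℕ) (R : σ1.Relations n) (b : Fin n → B),
            (∀ i, ΦU.Realize (fun _ => b i)) →
            ((ΦnR n R).Realize b ↔ ¬ (ΦR n R).Realize b)) ∧
         -- (3) 𝔄 is isomorphic to the structure induced on B' by the formulas ΦR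
         (∃ g : A → B,
            Function.Injective g ∧
            (∀ b : B, ΦU.Realize (fun _ => b) ↔ b ∈ Set.range g) ∧
            (∀ (n : ℕ) (R : σ1.Relations n) (a : Fin n → A),
              SA.RelMap R a ↔ (ΦR n R).Realize (g ∘ a))))

/-- Relation symbols of the language of two equivalences: two binary symbols P and Q. -/
inductive EqRel2 : ℕ → Type
  | P : EqRel2 2
  | Q : EqRel2 2

/-- The language {P², Q²} of two equivalences (purely relational). -/
def σE : Language := ⟨fun _ => Empty, EqRel2⟩

/-- Relation symbols of the language of a linear order and an equivalence:
two binary symbols < and ≈. -/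
inductive LERel : ℕ → Type
  | lt : LERel 2
  | equiv : LERel 2

/-- The language {<², ≈²} of a linear order and an equivalence (purely relational). -/
def σL : Language := ⟨fun _ => Empty, LERel⟩

/-- The class 2Eq_fin of finite nonempty models of two equivalences. -/
def TwoEqFin (A : Type) (SA : σE.Structure A) : Prop :=
  Finite A ∧ Nonempty A ∧
  Equivalence (fun x y : A => SA.RelMap EqRel2.P ![x, y]) ∧
  Equivalence (fun x y : A => SA.RelMap EqRel2.Q ![x, y])

/-- The class LEq_fin of finite nonempty models of a strict linear order and an equivalence. -/
def LEqFin (B : Type) (SB : σL.Structure B) : Prop :=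
  Finite B ∧ Nonempty B ∧
  (∀ x : B, ¬ SB.RelMap LERel.lt ![x, x]) ∧
  (∀ x y z : B, SB.RelMap LERel.lt ![x, y] → SB.RelMap LERel.lt ![y, z] →
    SB.RelMap LERel.lt ![x, z]) ∧
  (∀ x y : B, SB.RelMap LERel.lt ![x, y] ∨ x = y ∨ SB.RelMap LERel.lt ![y, x]) ∧
  Equivalence (fun x y : B => SB.RelMap LERel.equiv ![x, y])



namespace TwoEqAux

inductive Role | main | ptag | qtag | m1 | m2 | m3 | m4 | pa | pb | pc | pd | qa | qb | qc | qd
deriving DecidableEq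

instance : Fintype Role := ⟨⟨↑[Role.main, .ptag, .qtag, .m1, .m2, .m3, .m4, .pa, .pb, .pc, .pd, .qa, .qb, .qc, .qd],
  by decide⟩, fun x => by cases x <;> decide⟩

def reg : Role → ℕ
  | .main => 1 | .ptag => 3 | .qtag => 4
  | .m1 => 0 | .m2 => 0 | .m3 => 2 | .m4 => 2
  | .pa => 3 | .pb => 3 | .pc => 3 | .pd => 3
  | .qa => 4 | .qb => 4 | .qc => 4 | .qd => 4

def slot : Role → ℕ
  | .main => 0 | .ptag => 2 | .qtag => 2
  | .m1 => 0 | .m2 => 1 | .m3 => 0 | .m4 => 1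
  | .pa => 0 | .pb => 1 | .pc => 3 | .pd => 4
  | .qa => 0 | .qb => 1 | .qc => 3 | .qd => 4

def grp : Role → ℕ
  | .main => 0 | .ptag => 0 | .qtag => 0
  | .m1 => 1 | .m2 => 1 | .m3 => 1 | .m4 => 1
  | .pa => 2 | .pb => 2 | .pc => 2 | .pd => 2
  | .qa => 3 | .qb => 3 | .qc => 3 | .qd => 3

@[simp] lemma reg_main : reg Role.main = 1 := rfl
@[simp] lemma reg_ptag : reg Role.ptag = 3 := rfl
@[simp] lemma reg_qtag : reg Role.qtag = 4 := rfl
@[simp] lemma reg_m1 : reg Role.m1 = 0 := rfl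
@[simp] lemma reg_m2 : reg Role.m2 = 0 := rfl
@[simp] lemma reg_m3 : reg Role.m3 = 2 := rfl
@[simp] lemma reg_m4 : reg Role.m4 = 2 := rfl
@[simp] lemma reg_pa : reg Role.pa = 3 := rfl
@[simp] lemma reg_pb : reg Role.pb = 3 := rfl
@[simp] lemma reg_pc : reg Role.pc = 3 := rfl
@[simp] lemma reg_pd : reg Role.pd = 3 := rfl
@[simp] lemma reg_qa : reg Role.qa = 4 := rfl
@[simp] lemma reg_qb : reg Role.qb = 4 := rfl
@[simp] lemma reg_qc : reg Role.qc = 4 := rfl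
@[simp] lemma reg_qd : reg Role.qd = 4 := rfl
@[simp] lemma slot_main : slot Role.main = 0 := rfl
@[simp] lemma slot_ptag : slot Role.ptag = 2 := rfl
@[simp] lemma slot_qtag : slot Role.qtag = 2 := rfl
@[simp] lemma slot_m1 : slot Role.m1 = 0 := rfl
@[simp] lemma slot_m2 : slot Role.m2 = 1 := rfl
@[simp] lemma slot_m3 : slot Role.m3 = 0 := rfl
@[simp] lemma slot_m4 : slot Role.m4 = 1 := rfl
@[simp] lemma slot_pa : slot Role.pa = 0 := rfl
@[simp] lemma slot_pb : slot Role.pb = 1 := rfl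
@[simp] lemma slot_pc : slot Role.pc = 3 := rfl
@[simp] lemma slot_pd : slot Role.pd = 4 := rfl
@[simp] lemma slot_qa : slot Role.qa = 0 := rfl
@[simp] lemma slot_qb : slot Role.qb = 1 := rfl
@[simp] lemma slot_qc : slot Role.qc = 3 := rfl
@[simp] lemma slot_qd : slot Role.qd = 4 := rfl
@[simp] lemma grp_main : grp Role.main = 0 := rfl
@[simp] lemma grp_ptag : grp Role.ptag = 0 := rfl
@[simp] lemma grp_qtag : grp Role.qtag = 0 := rfl
@[simp] lemma grp_m1 : grp Role.m1 = 1 := rfl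
@[simp] lemma grp_m2 : grp Role.m2 = 1 := rfl
@[simp] lemma grp_m3 : grp Role.m3 = 1 := rfl
@[simp] lemma grp_m4 : grp Role.m4 = 1 := rfl
@[simp] lemma grp_pa : grp Role.pa = 2 := rfl
@[simp] lemma grp_pb : grp Role.pb = 2 := rfl
@[simp] lemma grp_pc : grp Role.pc = 2 := rfl
@[simp] lemma grp_pd : grp Role.pd = 2 := rfl
@[simp] lemma grp_qa : grp Role.qa = 3 := rfl
@[simp] lemma grp_qb : grp Role.qb = 3 := rfl
@[simp] lemma grp_qc : grp Role.qc = 3 := rfl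
@[simp] lemma grp_qd : grp Role.qd = 3 := rfl

lemma roleGrp0 : ∀ r, grp r = 0 → r = .main ∨ r = .ptag ∨ r = .qtag := by decide
lemma roleCases : ∀ r, grp r = 0 ∨ grp r = 1 ∨ grp r = 2 ∨ grp r = 3 := by decide
lemma roleG1 : ∀ r, grp r = 1 → reg r = 0 ∨ reg r = 2 := by decide
lemma roleG2 : ∀ r, grp r = 2 → reg r = 3 ∧ slot r ≠ 2 := by decide
lemma roleG3 : ∀ r, grp r = 3 → reg r = 4 ∧ slot r ≠ 2 := by decide
lemma roleReg1 : ∀ r, reg r = 1 → r = .main := by decide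
lemma roleReg0or2 : ∀ r, reg r = 0 ∨ reg r = 2 → grp r = 1 := by decide
lemma roleReg3 : ∀ r, reg r = 3 → grp r = 2 ∨ r = .ptag := by decide
lemma roleReg4 : ∀ r, reg r = 4 → grp r = 3 ∨ r = .qtag := by decide
lemma roleInj : ∀ r r', reg r = reg r' → slot r = slot r' → r = r' := by decide
lemma rolePigeon : ∀ r r1 r2 r3 : Role, grp r = 0 → grp r1 = 0 → grp r2 = 0 → grp r3 = 0 →
    (r1 = r ∨ r2 = r ∨ r3 = r ∨ r1 = r2 ∨ r1 = r3 ∨ r2 = r3) := by decide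

section Core
variable {A : Type} (p q idx : A → ℕ)

def zn (x : A × Role) : ℕ := if reg x.2 = 3 then p x.1 else if reg x.2 = 4 then q x.1 else 0

def blt (x y : A × Role) : Prop :=
  reg x.2 < reg y.2 ∨ (reg x.2 = reg y.2 ∧ (zn p q x < zn p q y ∨ (zn p q x = zn p q y ∧
    (slot x.2 < slot y.2 ∨ (slot x.2 = slot y.2 ∧ idx x.1 < idx y.1)))))

def beq (x y : A × Role) : Prop :=
  grp x.2 = grp y.2 ∧ (grp x.2 = 0 → x.1 = y.1) ∧ (grp x.2 = 2 → p x.1 = p y.1) ∧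
    (grp x.2 = 3 → q x.1 = q y.1)

lemma zn_eq_p {x : A × Role} (h : reg x.2 = 3) : zn p q x = p x.1 := by simp [zn, h]
lemma zn_eq_q {x : A × Role} (h : reg x.2 = 4) : zn p q x = q x.1 := by simp [zn, h]

lemma blt_irrefl (x : A × Role) : ¬ blt p q idx x x := by simp [blt]

lemma blt_trans {x y z : A × Role} (h1 : blt p q idx x y) (h2 : blt p q idx y z) :
    blt p q idx x z := by
  unfold blt at *; omega

variable {idx} in
lemma blt_total (hidx : Function.Injective idx) (x y : A × Role) :
    blt p q idx x y ∨ x = y ∨ blt p q idx y x := by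
  by_cases h1 : blt p q idx x y
  · exact Or.inl h1
  by_cases h2 : blt p q idx y x
  · exact Or.inr (Or.inr h2)
  refine Or.inr (Or.inl ?_)
  unfold blt at h1 h2
  have e1 : idx x.1 = idx y.1 := by omega
  have e2 : reg x.2 = reg y.2 := by omega
  have e3 : slot x.2 = slot y.2 := by omega
  exact Prod.ext (hidx e1) (roleInj _ _ e2 e3)

lemma beq_equiv : Equivalence (beq p q) := by
  constructor
  · intro x; exact ⟨rfl, fun _ => rfl, fun _ => rfl, fun _ => rfl⟩
  · rintro x y ⟨h1, h2, h3, h4⟩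
    refine ⟨h1.symm, fun h => (h2 (h1.trans h)).symm, fun h => (h3 (h1.trans h)).symm,
      fun h => (h4 (h1.trans h)).symm⟩
  · rintro x y z ⟨h1, h2, h3, h4⟩ ⟨g1, g2, g3, g4⟩
    refine ⟨h1.trans g1, fun h => (h2 h).trans (g2 (h1.symm.trans h)),
      fun h => (h3 h).trans (g3 (h1.symm.trans h)), fun h => (h4 h).trans (g4 (h1.symm.trans h))⟩

end Core
end TwoEqAux

namespace TwoEqAux
set_option linter.dupNamespace false
section Core2
variable {A : Type} {p q idx : A → ℕ}

@[simp] lemma zn_main (a : A) : zn p q (a, Role.main) = 0 := by simp [zn]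
@[simp] lemma zn_ptag (a : A) : zn p q (a, Role.ptag) = p a := by simp [zn]
@[simp] lemma zn_qtag (a : A) : zn p q (a, Role.qtag) = q a := by simp [zn]
@[simp] lemma zn_m1 (a : A) : zn p q (a, Role.m1) = 0 := by simp [zn]
@[simp] lemma zn_m2 (a : A) : zn p q (a, Role.m2) = 0 := by simp [zn]
@[simp] lemma zn_m3 (a : A) : zn p q (a, Role.m3) = 0 := by simp [zn]
@[simp] lemma zn_m4 (a : A) : zn p q (a, Role.m4) = 0 := by simp [zn]
@[simp] lemma zn_pa (a : A) : zn p q (a, Role.pa) = p a := by simp [zn]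
@[simp] lemma zn_pb (a : A) : zn p q (a, Role.pb) = p a := by simp [zn]
@[simp] lemma zn_pc (a : A) : zn p q (a, Role.pc) = p a := by simp [zn]
@[simp] lemma zn_pd (a : A) : zn p q (a, Role.pd) = p a := by simp [zn]
@[simp] lemma zn_qa (a : A) : zn p q (a, Role.qa) = q a := by simp [zn]
@[simp] lemma zn_qb (a : A) : zn p q (a, Role.qb) = q a := by simp [zn]
@[simp] lemma zn_qc (a : A) : zn p q (a, Role.qc) = q a := by simp [zn]
@[simp] lemma zn_qd (a : A) : zn p q (a, Role.qd) = q a := by simp [zn]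

lemma pin_ptag {a : A} {s w : A × Role} (h1 : beq p q s (a, Role.main))
    (h2 : blt p q idx (a, Role.main) s) (h3 : beq p q w s) (h4 : blt p q idx s w) :
    s = (a, Role.ptag) := by
  have hg : grp s.2 = 0 := by simpa using h1.1
  have hc : s.1 = a := h1.2.1 hg
  rcases roleGrp0 s.2 hg with h|h|h
  · have hs : s = (a, Role.main) := Prod.ext hc h
    rw [hs] at h2
    exact absurd h2 (blt_irrefl p q idx _)
  · exact Prod.ext hc h
  · exfalso
    have hs : s = (a, Role.qtag) := Prod.ext hc h
    subst hs
    have hg' : grp w.2 = 0 := by simpa using h3.1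
    have hc' : w.1 = a := h3.2.1 hg'
    rcases roleGrp0 w.2 hg' with h'|h'|h' <;>
      · rw [(Prod.ext hc' h' : w = (a, _))] at h4
        simp [blt] at h4
    
lemma pin_qtag {a : A} {s w w' : A × Role} (h1 : beq p q s (a, Role.main))
    (h2 : blt p q idx (a, Role.main) s) (h3 : beq p q w s) (h3' : beq p q w' s)
    (h4 : blt p q idx w w') (h5 : blt p q idx w' s) :
    s = (a, Role.qtag) := by
  have hg : grp s.2 = 0 := by simpa using h1.1
  have hc : s.1 = a := h1.2.1 hg
  rcases roleGrp0 s.2 hg with h|h|h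
  · have hs : s = (a, Role.main) := Prod.ext hc h
    rw [hs] at h2
    exact absurd h2 (blt_irrefl p q idx _)
  · exfalso
    have hs : s = (a, Role.ptag) := Prod.ext hc h
    subst hs
    have hg1 : grp w.2 = 0 := by simpa using h3.1
    have hc1 : w.1 = a := h3.2.1 hg1
    have hg2 : grp w'.2 = 0 := by simpa using h3'.1
    have hc2 : w'.1 = a := h3'.2.1 hg2
    rcases roleGrp0 w.2 hg1 with h'|h'|h' <;>
        rcases roleGrp0 w'.2 hg2 with h''|h''|h'' <;>
      · rw [(Prod.ext hc1 h' : w = (a, _))] at h4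
        rw [(Prod.ext hc2 h'' : w' = (a, _))] at h4 h5
        simp [blt] at h4 h5
  · exact Prod.ext hc h

lemma big_grp {u w1 w2 w3 : A × Role} (b1 : beq p q w1 u) (b2 : beq p q w2 u)
    (b3 : beq p q w3 u) (n1 : w1 ≠ u) (n2 : w2 ≠ u) (n3 : w3 ≠ u)
    (n4 : w1 ≠ w2) (n5 : w1 ≠ w3) (n6 : w2 ≠ w3) : grp u.2 ≠ 0 := by
  intro h0
  have g1 : grp w1.2 = 0 := b1.1.trans h0
  have g2 : grp w2.2 = 0 := b2.1.trans h0
  have g3 : grp w3.2 = 0 := b3.1.trans h0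
  have e1 : w1.1 = u.1 := b1.2.1 g1
  have e2 : w2.1 = u.1 := b2.2.1 g2
  have e3 : w3.1 = u.1 := b3.2.1 g3
  rcases rolePigeon u.2 w1.2 w2.2 w3.2 h0 g1 g2 g3 with h|h|h|h|h|h
  · exact n1 (Prod.ext e1 h)
  · exact n2 (Prod.ext e2 h)
  · exact n3 (Prod.ext e3 h)
  · exact n4 (Prod.ext (e1.trans e2.symm) h)
  · exact n5 (Prod.ext (e1.trans e3.symm) h)
  · exact n6 (Prod.ext (e2.trans e3.symm) h)

lemma straddle_p {a b : A} {u v : A × Role} (huv : beq p q u v) (hg : grp u.2 ≠ 0)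
    (h1 : blt p q idx u (a, Role.ptag)) (h2 : blt p q idx u (b, Role.ptag))
    (h3 : blt p q idx (a, Role.ptag) v) (h4 : blt p q idx (b, Role.ptag) v) :
    p a = p b := by
  rcases roleCases u.2 with h|h|h|h
  · exact absurd h hg
  · have hv : grp v.2 = 1 := huv.1.symm.trans h
    have hrv := roleG1 _ hv
    simp only [blt, zn_ptag, reg_ptag, slot_ptag, Prod.snd] at h3
    omega
  · obtain ⟨hru, hsu⟩ := roleG2 _ h
    have hv : grp v.2 = 2 := huv.1.symm.trans h
    obtain ⟨hrv, hsv⟩ := roleG2 _ hv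
    have hz : p u.1 = p v.1 := huv.2.2.1 h
    have zu := zn_eq_p p q hru
    have zv := zn_eq_p p q hrv
    simp only [blt, zn_ptag, reg_ptag, slot_ptag, Prod.snd] at h1 h2 h3 h4
    omega
  · obtain ⟨hru, -⟩ := roleG3 _ h
    simp only [blt, zn_ptag, reg_ptag, slot_ptag, Prod.snd] at h1
    omega

lemma sep_p {a b : A} {z : A × Role} (hg : grp z.2 ≠ 0)
    (h1 : blt p q idx (a, Role.ptag) z) (h2 : blt p q idx z (b, Role.ptag)) :
    p a ≠ p b := by
  intro hab
  rcases roleCases z.2 with h|h|h|h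
  · exact hg h
  · have := roleG1 _ h
    simp only [blt, zn_ptag, reg_ptag, slot_ptag, Prod.snd] at h1
    omega
  · obtain ⟨hr, hs⟩ := roleG2 _ h
    have hz := zn_eq_p p q (x := z) hr
    simp only [blt, zn_ptag, reg_ptag, slot_ptag, Prod.snd] at h1 h2
    omega
  · obtain ⟨hr, -⟩ := roleG3 _ h
    simp only [blt, zn_ptag, reg_ptag, slot_ptag, Prod.snd] at h2
    omega

lemma straddle_q {a b : A} {u v : A × Role} (huv : beq p q u v) (hg : grp u.2 ≠ 0)
    (h1 : blt p q idx u (a, Role.qtag)) (h2 : blt p q idx u (b, Role.qtag))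
    (h3 : blt p q idx (a, Role.qtag) v) (h4 : blt p q idx (b, Role.qtag) v) :
    q a = q b := by
  rcases roleCases u.2 with h|h|h|h
  · exact absurd h hg
  · have hv : grp v.2 = 1 := huv.1.symm.trans h
    have hrv := roleG1 _ hv
    simp only [blt, zn_qtag, reg_qtag, slot_qtag, Prod.snd] at h3
    omega
  · have hv : grp v.2 = 2 := huv.1.symm.trans h
    obtain ⟨hrv, -⟩ := roleG2 _ hv
    simp only [blt, zn_qtag, reg_qtag, slot_qtag, Prod.snd] at h3
    omega
  · obtain ⟨hru, hsu⟩ := roleG3 _ h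
    have hv : grp v.2 = 3 := huv.1.symm.trans h
    obtain ⟨hrv, hsv⟩ := roleG3 _ hv
    have hz : q u.1 = q v.1 := huv.2.2.2 h
    have zu := zn_eq_q p q hru
    have zv := zn_eq_q p q hrv
    simp only [blt, zn_qtag, reg_qtag, slot_qtag, Prod.snd] at h1 h2 h3 h4
    omega

lemma sep_q {a b : A} {z : A × Role} (hg : grp z.2 ≠ 0)
    (h1 : blt p q idx (a, Role.qtag) z) (h2 : blt p q idx z (b, Role.qtag)) :
    q a ≠ q b := by
  intro hab
  rcases roleCases z.2 with h|h|h|h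
  · exact hg h
  · have := roleG1 _ h
    simp only [blt, zn_qtag, reg_qtag, slot_qtag, Prod.snd] at h1
    omega
  · obtain ⟨hr, -⟩ := roleG2 _ h
    simp only [blt, zn_qtag, reg_qtag, slot_qtag, Prod.snd] at h1
    omega
  · obtain ⟨hr, hs⟩ := roleG3 _ h
    have hz := zn_eq_q p q (x := z) hr
    simp only [blt, zn_qtag, reg_qtag, slot_qtag, Prod.snd] at h1 h2
    omega

end Core2
end TwoEqAux

namespace TwoEqAux
section Core3
variable {A : Type} {p q idx : A → ℕ}

lemma no_two_above_ptag {c : A} {s s' : A × Role}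
    (hs : beq p q s (c, Role.ptag)) (hs' : beq p q s' (c, Role.ptag))
    (h3 : blt p q idx (c, Role.ptag) s) (h4 : blt p q idx s s') : False := by
  have hg : grp s.2 = 0 := by simpa using hs.1
  have hc : s.1 = c := hs.2.1 hg
  rcases roleGrp0 s.2 hg with h|h|h
  · rw [(Prod.ext hc h : s = (c, _))] at h3; simp [blt] at h3
  · rw [(Prod.ext hc h : s = (c, _))] at h3; simp [blt] at h3
  · rw [(Prod.ext hc h : s = (c, _))] at h4
    have hg' : grp s'.2 = 0 := by simpa using hs'.1
    have hc' : s'.1 = c := hs'.2.1 hg'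
    rcases roleGrp0 s'.2 hg' with h'|h'|h' <;>
      · rw [(Prod.ext hc' h' : s' = (c, _))] at h4; simp [blt] at h4

lemma none_above_qtag {c : A} {s : A × Role}
    (hs : beq p q s (c, Role.qtag)) (h3 : blt p q idx (c, Role.qtag) s) : False := by
  have hg : grp s.2 = 0 := by simpa using hs.1
  have hc : s.1 = c := hs.2.1 hg
  rcases roleGrp0 s.2 hg with h|h|h <;>
    · rw [(Prod.ext hc h : s = (c, _))] at h3; simp [blt] at h3

lemma U_sound {b s s' u v : A × Role}
    (hs : beq p q s b) (hs' : beq p q s' b) (h3 : blt p q idx b s) (h4 : blt p q idx s s')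
    (huv : beq p q u v) (h6 : blt p q idx u b) (h7 : blt p q idx b v) (h8 : ¬ beq p q u b)
    (hg : grp u.2 ≠ 0) : b.2 = Role.main := by
  rcases roleCases u.2 with h|h|h|h
  · exact absurd h hg
  · -- mobile marker group (around the main region)
    have hv : grp v.2 = 1 := huv.1.symm.trans h
    have hru := roleG1 _ h
    have hrv := roleG1 _ hv
    have hb : reg b.2 = 0 ∨ reg b.2 = 1 ∨ reg b.2 = 2 := by
      simp only [blt] at h6 h7; omega
    rcases hb with hb|hb|hb
    · exact absurd ⟨h.trans (roleReg0or2 b.2 (Or.inl hb)).symm,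
        fun h0 => absurd (h.symm.trans h0) (by norm_num),
        fun h0 => absurd (h.symm.trans h0) (by norm_num),
        fun h0 => absurd (h.symm.trans h0) (by norm_num)⟩ h8
    · exact roleReg1 b.2 hb
    · exact absurd ⟨h.trans (roleReg0or2 b.2 (Or.inr hb)).symm,
        fun h0 => absurd (h.symm.trans h0) (by norm_num),
        fun h0 => absurd (h.symm.trans h0) (by norm_num),
        fun h0 => absurd (h.symm.trans h0) (by norm_num)⟩ h8
  · -- P-marker group
    obtain ⟨hru, hsu⟩ := roleG2 _ h
    have hv : grp v.2 = 2 := huv.1.symm.trans h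
    obtain ⟨hrv, hsv⟩ := roleG2 _ hv
    have hz : p u.1 = p v.1 := huv.2.2.1 h
    have zu := zn_eq_p p q hru
    have zv := zn_eq_p p q hrv
    have hrr : reg b.2 = 3 := by simp only [blt] at h6 h7; omega
    rcases roleReg3 b.2 hrr with h2r | h2r
    · have hzr : zn p q b = p b.1 := zn_eq_p p q hrr
      have hpc : p u.1 = p b.1 := by simp only [blt] at h6 h7; omega
      exact absurd ⟨h.trans h2r.symm,
        fun h0 => absurd (h.symm.trans h0) (by norm_num),
        fun _ => hpc,
        fun h0 => absurd (h.symm.trans h0) (by norm_num)⟩ h8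
    · exfalso
      rw [(Prod.ext rfl h2r : b = (b.1, Role.ptag))] at hs hs' h3
      exact no_two_above_ptag hs hs' h3 h4
  · -- Q-marker group
    obtain ⟨hru, hsu⟩ := roleG3 _ h
    have hv : grp v.2 = 3 := huv.1.symm.trans h
    obtain ⟨hrv, hsv⟩ := roleG3 _ hv
    have hz : q u.1 = q v.1 := huv.2.2.2 h
    have zu := zn_eq_q p q hru
    have zv := zn_eq_q p q hrv
    have hrr : reg b.2 = 4 := by simp only [blt] at h6 h7; omega
    rcases roleReg4 b.2 hrr with h2r | h2r
    · have hzr : zn p q b = q b.1 := zn_eq_q p q hrr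
      have hpc : q u.1 = q b.1 := by simp only [blt] at h6 h7; omega
      exact absurd ⟨h.trans h2r.symm,
        fun h0 => absurd (h.symm.trans h0) (by norm_num),
        fun h0 => absurd (h.symm.trans h0) (by norm_num),
        fun _ => hpc⟩ h8
    · exfalso
      rw [(Prod.ext rfl h2r : b = (b.1, Role.qtag))] at hs h3
      exact none_above_qtag hs h3

end Core3
end TwoEqAux

namespace TwoEqAux
open FirstOrder FirstOrder.Language FirstOrder.Language.BoundedFormula

/-- free variable as a term -/
abbrev XV {k m : ℕ} (i : Fin k) : σL.Term (Fin k ⊕ Fin m) := Term.var (Sum.inl i)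
/-- bound variable as a term -/
abbrev BV {k m : ℕ} (j : Fin m) : σL.Term (Fin k ⊕ Fin m) := Term.var (Sum.inr j)

def fLt {k m : ℕ} (t u : σL.Term (Fin k ⊕ Fin m)) : σL.BoundedFormula (Fin k) m :=
  Relations.boundedFormula₂ (LERel.lt : σL.Relations 2) t u
def fEqv {k m : ℕ} (t u : σL.Term (Fin k ⊕ Fin m)) : σL.BoundedFormula (Fin k) m :=
  Relations.boundedFormula₂ (LERel.equiv : σL.Relations 2) t u

/-- `u` has three classmates, all four distinct (i.e. `u` lies in a marker class). -/
def fBig {k m : ℕ} (u w1 w2 w3 : σL.Term (Fin k ⊕ Fin m)) : σL.BoundedFormula (Fin k) m :=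
  fEqv w1 u ⊓ fEqv w2 u ⊓ fEqv w3 u ⊓ (w1.bdEqual u).not ⊓ (w2.bdEqual u).not ⊓
    (w3.bdEqual u).not ⊓ (w1.bdEqual w2).not ⊓ (w1.bdEqual w3).not ⊓ (w2.bdEqual w3).not

/-- `s` is the p-tag of `x` (equivalent to `x`, above it, with a classmate above). -/
def fPinP {k m : ℕ} (x s ws : σL.Term (Fin k ⊕ Fin m)) : σL.BoundedFormula (Fin k) m :=
  fEqv s x ⊓ fLt x s ⊓ fEqv ws s ⊓ fLt s ws

/-- `s` is the q-tag of `x` (equivalent to `x`, above it, with two distinct classmates below). -/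
def fPinQ {k m : ℕ} (x s w w' : σL.Term (Fin k ⊕ Fin m)) : σL.BoundedFormula (Fin k) m :=
  fEqv s x ⊓ fLt x s ⊓ fEqv w s ⊓ fEqv w' s ⊓ fLt w w' ⊓ fLt w' s

/-- matrix of the universe formula -/
def qfU : σL.BoundedFormula (Fin 1) 7 :=
  fEqv (BV 0) (XV 0) ⊓ fEqv (BV 1) (XV 0) ⊓ fLt (XV 0) (BV 0) ⊓ fLt (BV 0) (BV 1) ⊓
  fEqv (BV 2) (BV 3) ⊓ fLt (BV 2) (XV 0) ⊓ fLt (XV 0) (BV 3) ⊓ (fEqv (BV 2) (XV 0)).not ⊓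
  fBig (BV 2) (BV 4) (BV 5) (BV 6)

/-- matrix of the P-formula: both p-tags straddled by a marker pair -/
def qfP : σL.BoundedFormula (Fin 2) 9 :=
  fPinP (XV 0) (BV 0) (BV 4) ⊓ fPinP (XV 1) (BV 1) (BV 5) ⊓ fEqv (BV 2) (BV 3) ⊓
  fLt (BV 2) (BV 0) ⊓ fLt (BV 2) (BV 1) ⊓ fLt (BV 0) (BV 3) ⊓ fLt (BV 1) (BV 3) ⊓
  fBig (BV 2) (BV 6) (BV 7) (BV 8)

/-- matrix of the ¬P-formula: a marker strictly between the two p-tags -/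
def qfNP : σL.BoundedFormula (Fin 2) 8 :=
  fPinP (XV 0) (BV 0) (BV 3) ⊓ fPinP (XV 1) (BV 1) (BV 4) ⊓
  ((fLt (BV 0) (BV 2) ⊓ fLt (BV 2) (BV 1)) ⊔ (fLt (BV 1) (BV 2) ⊓ fLt (BV 2) (BV 0))) ⊓
  fBig (BV 2) (BV 5) (BV 6) (BV 7)

/-- matrix of the Q-formula -/
def qfQ : σL.BoundedFormula (Fin 2) 11 :=
  fPinQ (XV 0) (BV 0) (BV 4) (BV 5) ⊓ fPinQ (XV 1) (BV 1) (BV 6) (BV 7) ⊓ fEqv (BV 2) (BV 3) ⊓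
  fLt (BV 2) (BV 0) ⊓ fLt (BV 2) (BV 1) ⊓ fLt (BV 0) (BV 3) ⊓ fLt (BV 1) (BV 3) ⊓
  fBig (BV 2) (BV 8) (BV 9) (BV 10)

/-- matrix of the ¬Q-formula -/
def qfNQ : σL.BoundedFormula (Fin 2) 10 :=
  fPinQ (XV 0) (BV 0) (BV 3) (BV 4) ⊓ fPinQ (XV 1) (BV 1) (BV 5) (BV 6) ⊓
  ((fLt (BV 0) (BV 2) ⊓ fLt (BV 2) (BV 1)) ⊔ (fLt (BV 1) (BV 2) ⊓ fLt (BV 2) (BV 0))) ⊓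
  fBig (BV 2) (BV 7) (BV 8) (BV 9)

section Str
variable {A : Type} (p q idx : A → ℕ)

def SB : σL.Structure (A × Role) where
  funMap := fun f _ => f.elim
  RelMap := fun {n} r v =>
    match r with
    | .lt => blt p q idx (v 0) (v 1)
    | .equiv => beq p q (v 0) (v 1)

@[simp] lemma SB_lt (v : Fin 2 → A × Role) :
    (SB p q idx).RelMap LERel.lt v = blt p q idx (v 0) (v 1) := rfl
@[simp] lemma SB_eqv (v : Fin 2 → A × Role) :
    (SB p q idx).RelMap LERel.equiv v = beq p q (v 0) (v 1) := rfl

@[simp] lemma realize_fLt {k m : ℕ} (t u : σL.Term (Fin k ⊕ Fin m)) (v : Fin k → A × Role)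
    (xs : Fin m → A × Role) :
    @BoundedFormula.Realize σL _ (SB p q idx) _ _ (fLt t u) v xs ↔
      blt p q idx (@Term.realize σL _ (SB p q idx) _ (Sum.elim v xs) t)
        (@Term.realize σL _ (SB p q idx) _ (Sum.elim v xs) u) := Iff.rfl
@[simp] lemma realize_fEqv {k m : ℕ} (t u : σL.Term (Fin k ⊕ Fin m)) (v : Fin k → A × Role)
    (xs : Fin m → A × Role) :
    @BoundedFormula.Realize σL _ (SB p q idx) _ _ (fEqv t u) v xs ↔
      beq p q (@Term.realize σL _ (SB p q idx) _ (Sum.elim v xs) t)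
        (@Term.realize σL _ (SB p q idx) _ (Sum.elim v xs) u) := Iff.rfl

lemma U_iff (b : A × Role) :
    @Formula.Realize σL _ (SB p q idx) _ qfU.exs (fun _ => b) ↔ b.2 = Role.main := by
  letI := SB p q idx
  rw [show qfU.exs = BoundedFormula.exs qfU from rfl, BoundedFormula.realize_exs]
  constructor
  · rintro ⟨xs, hh⟩
    simp only [qfU, fBig, realize_fLt, realize_fEqv, realize_inf, realize_not, realize_rel₂,
      realize_bdEqual, Term.realize_var, Sum.elim_inl, Sum.elim_inr, SB_lt, SB_eqv,
      Matrix.cons_val_zero, Matrix.cons_val_one, Matrix.head_cons] at hh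
    obtain ⟨⟨⟨⟨⟨⟨⟨⟨hs, hs'⟩, h3⟩, h4⟩, huv⟩, h6⟩, h7⟩, h8⟩,
      ⟨⟨⟨⟨⟨⟨⟨⟨b1, b2⟩, b3⟩, n1⟩, n2⟩, n3⟩, n4⟩, n5⟩, n6⟩⟩ := hh
    exact U_sound hs hs' h3 h4 huv h6 h7 h8 (big_grp b1 b2 b3 n1 n2 n3 n4 n5 n6)
  · intro hb
    have hbb : b = (b.1, Role.main) := Prod.ext rfl hb
    refine ⟨fun j => if j = 0 then (b.1, Role.ptag) else if j = 1 then (b.1, Role.qtag)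
      else if j = 2 then (b.1, Role.m1) else if j = 3 then (b.1, Role.m3)
      else if j = 4 then (b.1, Role.m2) else if j = 5 then (b.1, Role.m3)
      else (b.1, Role.m4), ?_⟩
    rw [hbb]
    simp [qfU, fBig, realize_fLt, realize_fEqv, realize_inf, realize_not, realize_rel₂,
      realize_bdEqual, Term.realize_var, beq, blt]

lemma P_iff (a b : A) (v : Fin 2 → A × Role) (h0 : v 0 = (a, Role.main))
    (h1 : v 1 = (b, Role.main)) :
    @Formula.Realize σL _ (SB p q idx) _ qfP.exs v ↔ p a = p b := by
  letI := SB p q idx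
  rw [show qfP.exs = BoundedFormula.exs qfP from rfl, BoundedFormula.realize_exs]
  constructor
  · rintro ⟨xs, hh⟩
    simp only [qfP, fPinP, fBig, realize_fLt, realize_fEqv, realize_inf, realize_not, realize_rel₂,
      realize_bdEqual, Term.realize_var, Sum.elim_inl, Sum.elim_inr, SB_lt, SB_eqv,
      Matrix.cons_val_zero, Matrix.cons_val_one, Matrix.head_cons, h0, h1] at hh
    obtain ⟨hh, hbig⟩ := hh
    obtain ⟨⟨⟨⟨⟨⟨⟨⟨b1, b2⟩, b3⟩, n1⟩, n2⟩, n3⟩, n4⟩, n5⟩, n6⟩ := hbig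
    obtain ⟨⟨⟨⟨⟨hh, huv⟩, hu1⟩, hu2⟩, hv1⟩, hv2⟩ := hh
    obtain ⟨⟨⟨⟨ps1, ps2⟩, ps3⟩, ps4⟩, ⟨⟨⟨pt1, pt2⟩, pt3⟩, pt4⟩⟩ := hh
    have es : xs 0 = (a, Role.ptag) := pin_ptag ps1 ps2 ps3 ps4
    have et : xs 1 = (b, Role.ptag) := pin_ptag pt1 pt2 pt3 pt4
    rw [es] at hu1 hv1
    rw [et] at hu2 hv2
    exact straddle_p huv (big_grp b1 b2 b3 n1 n2 n3 n4 n5 n6) hu1 hu2 hv1 hv2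
  · intro hab
    refine ⟨fun j => if j = 0 then (a, Role.ptag) else if j = 1 then (b, Role.ptag)
      else if j = 2 then (a, Role.pa) else if j = 3 then (a, Role.pd)
      else if j = 4 then (a, Role.qtag) else if j = 5 then (b, Role.qtag)
      else if j = 6 then (a, Role.pb) else if j = 7 then (a, Role.pc)
      else (a, Role.pd), ?_⟩
    simp [qfP, fPinP, fBig, realize_fLt, realize_fEqv, realize_inf, realize_not, realize_rel₂,
      realize_bdEqual, Term.realize_var, h0, h1, beq, blt, hab]

lemma NP_iff (a b : A) (v : Fin 2 → A × Role) (h0 : v 0 = (a, Role.main))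
    (h1 : v 1 = (b, Role.main)) :
    @Formula.Realize σL _ (SB p q idx) _ qfNP.exs v ↔ ¬ (p a = p b) := by
  letI := SB p q idx
  rw [show qfNP.exs = BoundedFormula.exs qfNP from rfl, BoundedFormula.realize_exs]
  constructor
  · rintro ⟨xs, hh⟩
    simp only [qfNP, fPinP, fBig, realize_fLt, realize_fEqv, realize_inf, realize_sup, realize_not,
      realize_rel₂, realize_bdEqual, Term.realize_var, Sum.elim_inl, Sum.elim_inr, SB_lt,
      SB_eqv, Matrix.cons_val_zero, Matrix.cons_val_one, Matrix.head_cons, h0, h1] at hh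
    obtain ⟨hh, hbig⟩ := hh
    obtain ⟨⟨⟨⟨⟨⟨⟨⟨b1, b2⟩, b3⟩, n1⟩, n2⟩, n3⟩, n4⟩, n5⟩, n6⟩ := hbig
    obtain ⟨hh, hor⟩ := hh
    obtain ⟨⟨⟨⟨ps1, ps2⟩, ps3⟩, ps4⟩, ⟨⟨⟨pt1, pt2⟩, pt3⟩, pt4⟩⟩ := hh
    have es : xs 0 = (a, Role.ptag) := pin_ptag ps1 ps2 ps3 ps4
    have et : xs 1 = (b, Role.ptag) := pin_ptag pt1 pt2 pt3 pt4
    rw [es, et] at hor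
    have hgz := big_grp b1 b2 b3 n1 n2 n3 n4 n5 n6
    rcases hor with ⟨hz1, hz2⟩ | ⟨hz1, hz2⟩
    · exact sep_p hgz hz1 hz2
    · exact fun hab => sep_p hgz hz1 hz2 hab.symm
  · intro hab
    rcases Nat.lt_or_ge (p a) (p b) with hlt | hge
    · refine ⟨fun j => if j = 0 then (a, Role.ptag) else if j = 1 then (b, Role.ptag)
        else if j = 2 then (a, Role.pc) else if j = 3 then (a, Role.qtag)
        else if j = 4 then (b, Role.qtag) else if j = 5 then (a, Role.pa)
        else if j = 6 then (a, Role.pb) else (a, Role.pd), ?_⟩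
      simp [qfNP, fPinP, fBig, realize_fLt, realize_fEqv, realize_inf, realize_sup, realize_not,
        realize_rel₂, realize_bdEqual, Term.realize_var, h0, h1, beq, blt, hlt]
    · have hlt : p b < p a := by omega
      refine ⟨fun j => if j = 0 then (a, Role.ptag) else if j = 1 then (b, Role.ptag)
        else if j = 2 then (b, Role.pc) else if j = 3 then (a, Role.qtag)
        else if j = 4 then (b, Role.qtag) else if j = 5 then (b, Role.pa)
        else if j = 6 then (b, Role.pb) else (b, Role.pd), ?_⟩
      simp [qfNP, fPinP, fBig, realize_fLt, realize_fEqv, realize_inf, realize_sup, realize_not,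
        realize_rel₂, realize_bdEqual, Term.realize_var, h0, h1, beq, blt, hlt]

lemma Q_iff (a b : A) (v : Fin 2 → A × Role) (h0 : v 0 = (a, Role.main))
    (h1 : v 1 = (b, Role.main)) :
    @Formula.Realize σL _ (SB p q idx) _ qfQ.exs v ↔ q a = q b := by
  letI := SB p q idx
  rw [show qfQ.exs = BoundedFormula.exs qfQ from rfl, BoundedFormula.realize_exs]
  constructor
  · rintro ⟨xs, hh⟩
    simp only [qfQ, fPinQ, fBig, realize_fLt, realize_fEqv, realize_inf, realize_not, realize_rel₂,
      realize_bdEqual, Term.realize_var, Sum.elim_inl, Sum.elim_inr, SB_lt, SB_eqv,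
      Matrix.cons_val_zero, Matrix.cons_val_one, Matrix.head_cons, h0, h1] at hh
    obtain ⟨hh, hbig⟩ := hh
    obtain ⟨⟨⟨⟨⟨⟨⟨⟨b1, b2⟩, b3⟩, n1⟩, n2⟩, n3⟩, n4⟩, n5⟩, n6⟩ := hbig
    obtain ⟨⟨⟨⟨⟨hh, huv⟩, hu1⟩, hu2⟩, hv1⟩, hv2⟩ := hh
    obtain ⟨⟨⟨⟨⟨⟨ps1, ps2⟩, ps3⟩, ps3'⟩, ps4⟩, ps5⟩,
      ⟨⟨⟨⟨⟨pt1, pt2⟩, pt3⟩, pt3'⟩, pt4⟩, pt5⟩⟩ := hh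
    have es : xs 0 = (a, Role.qtag) := pin_qtag ps1 ps2 ps3 ps3' ps4 ps5
    have et : xs 1 = (b, Role.qtag) := pin_qtag pt1 pt2 pt3 pt3' pt4 pt5
    rw [es] at hu1 hv1
    rw [et] at hu2 hv2
    exact straddle_q huv (big_grp b1 b2 b3 n1 n2 n3 n4 n5 n6) hu1 hu2 hv1 hv2
  · intro hab
    refine ⟨fun j => if j = 0 then (a, Role.qtag) else if j = 1 then (b, Role.qtag)
      else if j = 2 then (a, Role.qa) else if j = 3 then (a, Role.qd)
      else if j = 4 then (a, Role.main) else if j = 5 then (a, Role.ptag)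
      else if j = 6 then (b, Role.main) else if j = 7 then (b, Role.ptag)
      else if j = 8 then (a, Role.qb) else if j = 9 then (a, Role.qc)
      else (a, Role.qd), ?_⟩
    simp [qfQ, fPinQ, fBig, realize_fLt, realize_fEqv, realize_inf, realize_not, realize_rel₂,
      realize_bdEqual, Term.realize_var, h0, h1, beq, blt, hab]

lemma NQ_iff (a b : A) (v : Fin 2 → A × Role) (h0 : v 0 = (a, Role.main))
    (h1 : v 1 = (b, Role.main)) :
    @Formula.Realize σL _ (SB p q idx) _ qfNQ.exs v ↔ ¬ (q a = q b) := by
  letI := SB p q idx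
  rw [show qfNQ.exs = BoundedFormula.exs qfNQ from rfl, BoundedFormula.realize_exs]
  constructor
  · rintro ⟨xs, hh⟩
    simp only [qfNQ, fPinQ, fBig, realize_fLt, realize_fEqv, realize_inf, realize_sup, realize_not,
      realize_rel₂, realize_bdEqual, Term.realize_var, Sum.elim_inl, Sum.elim_inr, SB_lt,
      SB_eqv, Matrix.cons_val_zero, Matrix.cons_val_one, Matrix.head_cons, h0, h1] at hh
    obtain ⟨hh, hbig⟩ := hh
    obtain ⟨⟨⟨⟨⟨⟨⟨⟨b1, b2⟩, b3⟩, n1⟩, n2⟩, n3⟩, n4⟩, n5⟩, n6⟩ := hbig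
    obtain ⟨hh, hor⟩ := hh
    obtain ⟨⟨⟨⟨⟨⟨ps1, ps2⟩, ps3⟩, ps3'⟩, ps4⟩, ps5⟩,
      ⟨⟨⟨⟨⟨pt1, pt2⟩, pt3⟩, pt3'⟩, pt4⟩, pt5⟩⟩ := hh
    have es : xs 0 = (a, Role.qtag) := pin_qtag ps1 ps2 ps3 ps3' ps4 ps5
    have et : xs 1 = (b, Role.qtag) := pin_qtag pt1 pt2 pt3 pt3' pt4 pt5
    rw [es, et] at hor
    have hgz := big_grp b1 b2 b3 n1 n2 n3 n4 n5 n6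
    rcases hor with ⟨hz1, hz2⟩ | ⟨hz1, hz2⟩
    · exact sep_q hgz hz1 hz2
    · exact fun hab => sep_q hgz hz1 hz2 hab.symm
  · intro hab
    rcases Nat.lt_or_ge (q a) (q b) with hlt | hge
    · refine ⟨fun j => if j = 0 then (a, Role.qtag) else if j = 1 then (b, Role.qtag)
        else if j = 2 then (a, Role.qc) else if j = 3 then (a, Role.main)
        else if j = 4 then (a, Role.ptag) else if j = 5 then (b, Role.main)
        else if j = 6 then (b, Role.ptag) else if j = 7 then (a, Role.qa)
        else if j = 8 then (a, Role.qb) else (a, Role.qd), ?_⟩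
      simp [qfNQ, fPinQ, fBig, realize_fLt, realize_fEqv, realize_inf, realize_sup, realize_not,
        realize_rel₂, realize_bdEqual, Term.realize_var, h0, h1, beq, blt, hlt]
    · have hlt : q b < q a := by omega
      refine ⟨fun j => if j = 0 then (a, Role.qtag) else if j = 1 then (b, Role.qtag)
        else if j = 2 then (b, Role.qc) else if j = 3 then (a, Role.main)
        else if j = 4 then (a, Role.ptag) else if j = 5 then (b, Role.main)
        else if j = 6 then (b, Role.ptag) else if j = 7 then (b, Role.qa)
        else if j = 8 then (b, Role.qb) else (b, Role.qd), ?_⟩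
      simp [qfNQ, fPinQ, fBig, realize_fLt, realize_fEqv, realize_inf, realize_sup, realize_not,
        realize_rel₂, realize_bdEqual, Term.realize_var, h0, h1, beq, blt, hlt]

end Str
end TwoEqAux

namespace TwoEqAux
open FirstOrder FirstOrder.Language FirstOrder.Language.BoundedFormula

lemma isSigma1_exs {L : Language} {α : Type*} {n : ℕ} {φ : L.BoundedFormula α n}
    (h : IsSigma1 φ) : IsSigma1 φ.exs := by
  induction n with
  | zero => exact h
  | succ n ih => exact ih h.ex

lemma qfU_isQF : qfU.IsQF := by
  unfold qfU fBig fLt fEqv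
  repeat' first
    | exact (IsAtomic.rel _ _).isQF
    | exact (IsAtomic.equal _ _).isQF
    | apply IsQF.inf
    | apply IsQF.sup
    | apply IsQF.not

lemma qfP_isQF : qfP.IsQF := by
  unfold qfP fPinP fBig fLt fEqv
  repeat' first
    | exact (IsAtomic.rel _ _).isQF
    | exact (IsAtomic.equal _ _).isQF
    | apply IsQF.inf
    | apply IsQF.sup
    | apply IsQF.not

lemma qfNP_isQF : qfNP.IsQF := by
  unfold qfNP fPinP fBig fLt fEqv
  repeat' first
    | exact (IsAtomic.rel _ _).isQF
    | exact (IsAtomic.equal _ _).isQF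
    | apply IsQF.inf
    | apply IsQF.sup
    | apply IsQF.not

lemma qfQ_isQF : qfQ.IsQF := by
  unfold qfQ fPinQ fBig fLt fEqv
  repeat' first
    | exact (IsAtomic.rel _ _).isQF
    | exact (IsAtomic.equal _ _).isQF
    | apply IsQF.inf
    | apply IsQF.sup
    | apply IsQF.not

lemma qfNQ_isQF : qfNQ.IsQF := by
  unfold qfNQ fPinQ fBig fLt fEqv
  repeat' first
    | exact (IsAtomic.rel _ _).isQF
    | exact (IsAtomic.equal _ _).isQF
    | apply IsQF.inf
    | apply IsQF.sup
    | apply IsQF.not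

/-- canonical numeric key of the `P`-class of `a`: the least `ι`-value in the class -/
noncomputable def zkey {A : Type} [Fintype A] (P : A → A → Prop) (ι : A → ℕ) (a : A) : ℕ :=
  letI := Classical.decPred (P a)
  if h : ((Finset.univ.filter (P a)).image ι).Nonempty then
    ((Finset.univ.filter (P a)).image ι).min' h
  else 0

lemma zkey_mem {A : Type} [Fintype A] {P : A → A → Prop} (hrefl : ∀ a, P a a) (ι : A → ℕ)
    (a : A) : ∃ c, P a c ∧ ι c = zkey P ι a := by
  letI := Classical.decPred (P a)
  have hne : ((Finset.univ.filter (P a)).image ι).Nonempty :=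
    ⟨ι a, Finset.mem_image.2 ⟨a, Finset.mem_filter.2 ⟨Finset.mem_univ _, hrefl a⟩, rfl⟩⟩
  unfold zkey
  rw [dif_pos hne]
  obtain ⟨c, hc, hιc⟩ := Finset.mem_image.1 (Finset.min'_mem _ hne)
  exact ⟨c, (Finset.mem_filter.1 hc).2, hιc⟩

lemma zkey_eq_iff {A : Type} [Fintype A] {P : A → A → Prop} (hE : Equivalence P) {ι : A → ℕ}
    (hι : Function.Injective ι) (a b : A) : zkey P ι a = zkey P ι b ↔ P a b := by
  constructor
  · intro h
    obtain ⟨c, hc, hιc⟩ := zkey_mem (fun x => hE.refl x) ι a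
    obtain ⟨d, hd, hιd⟩ := zkey_mem (fun x => hE.refl x) ι b
    have hcd : c = d := hι (by rw [hιc, hιd, h])
    subst hcd
    exact hE.trans hc (hE.symm hd)
  · intro h
    have hset : (@Finset.filter A (P a) (Classical.decPred (P a)) Finset.univ).image ι =
        (@Finset.filter A (P b) (Classical.decPred (P b)) Finset.univ).image ι := by
      ext x
      simp only [Finset.mem_image, Finset.mem_filter, Finset.mem_univ, true_and]
      constructor
      · rintro ⟨c, hc, rfl⟩; exact ⟨c, hE.trans (hE.symm h) hc, rfl⟩
      · rintro ⟨c, hc, rfl⟩; exact ⟨c, hE.trans h hc, rfl⟩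
    unfold zkey
    simp only [hset]

end TwoEqAux

namespace TwoEqAux
open FirstOrder FirstOrder.Language

def PhiR : (n : ℕ) → σE.Relations n → σL.Formula (Fin n)
  | _, .P => qfP.exs
  | _, .Q => qfQ.exs

def PhinR : (n : ℕ) → σE.Relations n → σL.Formula (Fin n)
  | _, .P => qfNP.exs
  | _, .Q => qfNQ.exs

end TwoEqAux

/-- 2Eq_fin is Σ₁-interpretable without parameters in LEq_fin. -/
theorem twoEqFin_sigma1_interpretable_in_lEqFin :
    Sigma1Interpretable σE σL TwoEqFin LEqFin := by
  classical
  open TwoEqAux in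
  refine ⟨qfU.exs, PhiR, PhinR,
    isSigma1_exs (.of_isQF qfU_isQF), ?_, ?_, ?_⟩
  · intro n R
    cases R
    · exact isSigma1_exs (.of_isQF qfP_isQF)
    · exact isSigma1_exs (.of_isQF qfQ_isQF)
  · intro n R
    cases R
    · exact isSigma1_exs (.of_isQF qfNP_isQF)
    · exact isSigma1_exs (.of_isQF qfNQ_isQF)
  · intro A SA hA
    obtain ⟨hfin, hne, hPE, hQE⟩ := hA
    haveI : Finite A := hfin
    haveI := Fintype.ofFinite A
    obtain ⟨a0⟩ := hne
    set ι : A → ℕ := fun a => ((Fintype.equivFin A) a : ℕ) with hι_def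
    have hι : Function.Injective ι := fun x y h =>
      (Fintype.equivFin A).injective (Fin.val_injective h)
    set pz : A → ℕ := zkey (fun x y => SA.RelMap EqRel2.P ![x, y]) ι with hpz_def
    set qz : A → ℕ := zkey (fun x y => SA.RelMap EqRel2.Q ![x, y]) ι with hqz_def
    have hp_iff : ∀ a b, pz a = pz b ↔ SA.RelMap EqRel2.P ![a, b] :=
      fun a b => zkey_eq_iff hPE hι a b
    have hq_iff : ∀ a b, qz a = qz b ↔ SA.RelMap EqRel2.Q ![a, b] :=
      fun a b => zkey_eq_iff hQE hι a b
    refine ⟨A × Role, SB pz qz ι, ?_, ?_, ?_, ?_⟩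
    · -- the target structure is a finite nonempty linear order with an equivalence
      refine ⟨inferInstance, ⟨(a0, Role.main)⟩, ?_, ?_, ?_, ?_⟩
      · intro x h
        exact blt_irrefl pz qz ι x (by simpa using h)
      · intro x y z h1 h2
        have h3 := blt_trans pz qz ι (x := x) (y := y) (z := z)
          (by simpa using h1) (by simpa using h2)
        simpa using h3
      · intro x y
        rcases blt_total pz qz hι x y with h | h | h
        · exact Or.inl (by simpa using h)
        · exact Or.inr (Or.inl h)
        · exact Or.inr (Or.inr (by simpa using h))
      · have h := beq_equiv pz qz
        constructor
        · intro x; simpa using h.refl x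
        · intro x y hxy; have := h.symm (x := x) (y := y) (by simpa using hxy); simpa using this
        · intro x y z h1 h2
          have := h.trans (by simpa using h1 : beq pz qz x y) (by simpa using h2 : beq pz qz y z)
          simpa using this
    · -- (1) nonemptiness of the interpreted universe
      exact ⟨(a0, Role.main), (U_iff pz qz ι _).2 rfl⟩
    · -- (2) the negative formulas define the complements
      intro n R bb hbb
      cases R with
      | P =>
        have h0 : bb 0 = ((bb 0).1, Role.main) :=
          Prod.ext rfl ((U_iff pz qz ι (bb 0)).1 (hbb 0))
        have h1 : bb 1 = ((bb 1).1, Role.main) :=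
          Prod.ext rfl ((U_iff pz qz ι (bb 1)).1 (hbb 1))
        show @Formula.Realize σL _ (SB pz qz ι) _ qfNP.exs bb ↔
          ¬ @Formula.Realize σL _ (SB pz qz ι) _ qfP.exs bb
        rw [NP_iff pz qz ι _ _ bb h0 h1, P_iff pz qz ι _ _ bb h0 h1]
      | Q =>
        have h0 : bb 0 = ((bb 0).1, Role.main) :=
          Prod.ext rfl ((U_iff pz qz ι (bb 0)).1 (hbb 0))
        have h1 : bb 1 = ((bb 1).1, Role.main) :=
          Prod.ext rfl ((U_iff pz qz ι (bb 1)).1 (hbb 1))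
        show @Formula.Realize σL _ (SB pz qz ι) _ qfNQ.exs bb ↔
          ¬ @Formula.Realize σL _ (SB pz qz ι) _ qfQ.exs bb
        rw [NQ_iff pz qz ι _ _ bb h0 h1, Q_iff pz qz ι _ _ bb h0 h1]
    · -- (3) the isomorphism onto the interpreted structure
      refine ⟨fun a => (a, Role.main), fun x y h => congrArg Prod.fst h, ?_, ?_⟩
      · intro b
        rw [U_iff pz qz ι b]
        constructor
        · intro hb; exact ⟨b.1, (Prod.ext rfl hb.symm : ((b.1, Role.main) : A × Role) = b)⟩
        · rintro ⟨a, rfl⟩; rfl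
      · intro n R aa
        cases R with
        | P =>
          have hvec : SA.RelMap EqRel2.P aa = SA.RelMap EqRel2.P ![aa 0, aa 1] := by
            congr 1
            funext i
            fin_cases i <;> simp
          show SA.RelMap EqRel2.P aa ↔
            @Formula.Realize σL _ (SB pz qz ι) _ qfP.exs ((fun a => (a, Role.main)) ∘ aa)
          rw [hvec, P_iff pz qz ι (aa 0) (aa 1) _ rfl rfl]
          exact (hp_iff _ _).symm
        | Q =>
          have hvec : SA.RelMap EqRel2.Q aa = SA.RelMap EqRel2.Q ![aa 0, aa 1] := by
            congr 1
            funext i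
            fin_cases i <;> simp
          show SA.RelMap EqRel2.Q aa ↔
            @Formula.Realize σL _ (SB pz qz ι) _ qfQ.exs ((fun a => (a, Role.main)) ∘ aa)
          rw [hvec, Q_iff pz qz ι (aa 0) (aa 1) _ rfl rfl]
          exact (hq_iff _ _).symm
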